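/- Fix 1 ≤ s ≤ m-1 and k ≥ 1. For P₁, P₂ ∈ H^s_{k-1}, the form P = xP₁ + x*P₂ satisfies (d+d*)P = 0 if and only if (k-1+m-s)P₁ + (k-1+s)P₂ = 0. -/

import Mathlib

open MvPolynomial Finset

noncomputable section

/-- Polynomial differential forms on ℝ^m: a coefficient polynomial for each
increasing multi-index `I ⊆ {1,…,m}` (representing `dx_I`). -/
abbrev PForm (m : ℕ) := Finset (Fin m) → MvPolynomial (Fin m) ℝ

/-- The sign `(-1)^{#{i ∈ I : i < j}}`. -/
def sgn (m : ℕ) (j : Fin m) (I : Finset (Fin m)) : ℝ :=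
  (-1 : ℝ) ^ (I.filter (fun i => i < j)).card

/-- Exterior multiplication `dx_j ∧ ·`. -/
def wedgeOp (m : ℕ) (j : Fin m) : PForm m →ₗ[ℝ] PForm m where
  toFun P I := if j ∈ I then sgn m j I • P (I.erase j) else 0
  map_add' P Q := by
    funext I; by_cases h : j ∈ I <;> simp [h, smul_add]
  map_smul' c P := by
    funext I; by_cases h : j ∈ I <;> simp [h, smul_smul, mul_comm]

/-- Contraction (interior product) `dx_j ⌟ ·`. -/
def contrOp (m : ℕ) (j : Fin m) : PForm m →ₗ[ℝ] PForm m where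
  toFun P I := if j ∈ I then 0 else sgn m j I • P (insert j I)
  map_add' P Q := by
    funext I; by_cases h : j ∈ I <;> simp [h, smul_add]
  map_smul' c P := by
    funext I; by_cases h : j ∈ I <;> simp [h, smul_smul, mul_comm]

/-- Multiplication of the coefficients by the variable `x_j`. -/
def mulXOp (m : ℕ) (j : Fin m) : PForm m →ₗ[ℝ] PForm m where
  toFun P I := X j * P I
  map_add' P Q := by funext I; simp [mul_add]
  map_smul' c P := by funext I; simp [mul_smul_comm]

/-- Partial derivative `∂_{x_j}` of the coefficients. -/
def pderivOp (m : ℕ) (j : Fin m) : PForm m →ₗ[ℝ] PForm m where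
  toFun P I := pderiv j (P I)
  map_add' P Q := by funext I; simp
  map_smul' c P := by funext I; simp

/-- `x = -∑_j x_j dx_j ∧`. -/
def xOp (m : ℕ) : PForm m →ₗ[ℝ] PForm m := - ∑ j, mulXOp m j ∘ₗ wedgeOp m j

/-- `x* = ∑_j x_j dx_j ⌟`. -/
def xStarOp (m : ℕ) : PForm m →ₗ[ℝ] PForm m := ∑ j, mulXOp m j ∘ₗ contrOp m j

/-- The de Rham differential `d = ∑_j ∂_{x_j} dx_j ∧`. -/
def dOp (m : ℕ) : PForm m →ₗ[ℝ] PForm m := ∑ j, wedgeOp m j ∘ₗ pderivOp m j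

/-- Its formal adjoint `d* = -∑_j ∂_{x_j} dx_j ⌟`. -/
def dStarOp (m : ℕ) : PForm m →ₗ[ℝ] PForm m := - ∑ j, contrOp m j ∘ₗ pderivOp m j

/-- The Euler operator `E = ∑_j x_j ∂_{x_j}`. -/
def eulerOp (m : ℕ) : PForm m →ₗ[ℝ] PForm m := ∑ j, mulXOp m j ∘ₗ pderivOp m j

/-- The skew Euler operator `Ê = ∑_j (dx_j∧)(dx_j⌟)`. -/
def skewEulerOp (m : ℕ) : PForm m →ₗ[ℝ] PForm m := ∑ j, wedgeOp m j ∘ₗ contrOp m j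

/-- The componentwise Laplacian `Δ = ∑_j ∂²_{x_j}`. -/
def lapOp (m : ℕ) : PForm m →ₗ[ℝ] PForm m := ∑ j, pderivOp m j ∘ₗ pderivOp m j

/-- Multiplication by `r² = x_1² + ⋯ + x_m²`. -/
def r2Op (m : ℕ) : PForm m →ₗ[ℝ] PForm m := ∑ j, mulXOp m j ∘ₗ mulXOp m j

/-- `P` is an `s`-form: only components `dx_I` with `|I| = s` occur. -/
def IsSForm (m s : ℕ) (P : PForm m) : Prop := ∀ I : Finset (Fin m), I.card ≠ s → P I = 0

/-- All coefficients of `P` are homogeneous polynomials of degree `k`. -/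
def IsHomForm (m k : ℕ) (P : PForm m) : Prop := ∀ I : Finset (Fin m), (P I).IsHomogeneous k

/-- `H^s_k`: homogeneous polynomial `s`-forms of degree `k` solving the
Hodge–de Rham system `dP = 0`, `d*P = 0`. -/
def Hset (m s k : ℕ) : Set (PForm m) :=
  {P | IsSForm m s P ∧ IsHomForm m k P ∧ dOp m P = 0 ∧ dStarOp m P = 0}

/-- `ℳ_k`: homogeneous degree-`k` polynomial forms with `(d + d*)P = 0`. -/
def Mk (m k : ℕ) : Set (PForm m) :=
  {P | IsHomForm m k P ∧ (dOp m + dStarOp m) P = 0}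

/-- `M_{s,k} = [(k-1+m-s)x* - (k-1+s)x] H^s_{k-1}`. -/
def Mset (m s k : ℕ) : Set (PForm m) :=
  (⇑(((k : ℝ) - 1 + m - s) • xStarOp m - ((k : ℝ) - 1 + s) • xOp m)) '' Hset m s (k - 1)

end
section Aux
variable {m : ℕ}

lemma sgn_mul_self (j : Fin m) (I : Finset (Fin m)) : sgn m j I * sgn m j I = 1 := by
  simp [sgn, ← pow_add, ← two_mul, pow_mul]

lemma sgn_erase_self (j : Fin m) (I : Finset (Fin m)) : sgn m j (I.erase j) = sgn m j I := by
  unfold sgn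
  rw [Finset.filter_erase, Finset.erase_eq_of_notMem (by simp)]

lemma sgn_insert_self (j : Fin m) (I : Finset (Fin m)) : sgn m j (insert j I) = sgn m j I := by
  unfold sgn
  rw [Finset.filter_insert, if_neg (lt_irrefl j)]

lemma sgn_erase (i j : Fin m) (I : Finset (Fin m)) (hji : j ≠ i) (hj : j ∈ I) :
    sgn m i (I.erase j) = (if j < i then -1 else 1) * sgn m i I := by
  unfold sgn
  rw [Finset.filter_erase]
  by_cases h : j < i
  · have hjf : j ∈ I.filter (fun x => x < i) := Finset.mem_filter.2 ⟨hj, h⟩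
    rw [if_pos h, Finset.card_erase_of_mem hjf]
    obtain ⟨c, hc⟩ : ∃ c, (I.filter (fun x => x < i)).card = c + 1 :=
      ⟨_, (Nat.succ_pred_eq_of_pos (Finset.card_pos.mpr ⟨j, hjf⟩)).symm⟩
    rw [hc]
    simp [pow_succ]
  · rw [if_neg h, Finset.erase_eq_of_notMem (by simp [h]), one_mul]

lemma sgn_insert (i j : Fin m) (I : Finset (Fin m)) (hji : j ≠ i) (hj : j ∉ I) :
    sgn m i (insert j I) = (if j < i then -1 else 1) * sgn m i I := by
  unfold sgn
  rw [Finset.filter_insert]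
  by_cases h : j < i
  · rw [if_pos h, if_pos h, Finset.card_insert_of_notMem (by simp [hj]), pow_succ]
    ring
  · rw [if_neg h, if_neg h, one_mul]

lemma sgn_add_cancel (i j : Fin m) (hij : i ≠ j) (u v : ℝ) :
    u * ((if j < i then -1 else 1) * v) + v * ((if i < j then -1 else 1) * u) = 0 := by
  rcases lt_or_gt_of_ne hij with h | h
  · rw [if_neg (asymm h), if_pos h]; ring
  · rw [if_pos h, if_neg (asymm h)]; ring

end Aux
section Apply
variable {m : ℕ}

lemma dOp_apply (Q : PForm m) (I : Finset (Fin m)) :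
    dOp m Q I = ∑ j, if j ∈ I then sgn m j I • (pderiv j) (Q (I.erase j)) else 0 := by
  simp [dOp, wedgeOp, pderivOp, LinearMap.sum_apply, Finset.sum_apply]

lemma dStarOp_apply (Q : PForm m) (I : Finset (Fin m)) :
    dStarOp m Q I = ∑ j, if j ∈ I then 0 else -(sgn m j I • (pderiv j) (Q (insert j I))) := by
  rw [show dStarOp m Q I = -∑ j, (if j ∈ I then 0 else sgn m j I • (pderiv j) (Q (insert j I))) by
    simp [dStarOp, contrOp, pderivOp, LinearMap.sum_apply, Finset.sum_apply]]
  rw [← Finset.sum_neg_distrib]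
  exact Finset.sum_congr rfl fun j _ => by by_cases h : j ∈ I <;> simp [h]

lemma xOp_apply (Q : PForm m) (I : Finset (Fin m)) :
    xOp m Q I = ∑ i, if i ∈ I then -(sgn m i I • (X i * Q (I.erase i))) else 0 := by
  simp [xOp, wedgeOp, mulXOp, LinearMap.sum_apply, Finset.sum_apply, apply_ite Neg.neg,
    mul_smul_comm]

lemma xStarOp_apply (Q : PForm m) (I : Finset (Fin m)) :
    xStarOp m Q I = ∑ i, if i ∈ I then 0 else sgn m i I • (X i * Q (insert i I)) := by
  simp [xStarOp, contrOp, mulXOp, LinearMap.sum_apply, Finset.sum_apply, mul_smul_comm]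

lemma pd_X_mul (i j : Fin m) (q : MvPolynomial (Fin m) ℝ) :
    pderiv j (X i * q) = (if i = j then q else 0) + X i * pderiv j q := by
  rw [pderiv_mul, pderiv_X, Pi.single_apply]
  by_cases h : i = j
  · simp [h]
  · simp [h, fun hh : j = i => h hh.symm]

end Apply
section Key
variable {m : ℕ}

lemma key1 (Q : PForm m) : dOp m (xOp m Q) + xOp m (dOp m Q) = 0 := by
  funext I
  show dOp m (xOp m Q) I + xOp m (dOp m Q) I = 0
  have e1 : dOp m (xOp m Q) I =
      ∑ j, ∑ i, if j ∈ I ∧ i ∈ I ∧ i ≠ j then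
        -((sgn m j I * sgn m i (I.erase j)) •
          (X i * pderiv j (Q ((I.erase j).erase i)))) else 0 := by
    rw [dOp_apply]
    refine Finset.sum_congr rfl fun j _ => ?_
    by_cases hj : j ∈ I
    · rw [if_pos hj, xOp_apply, map_sum, Finset.smul_sum]
      refine Finset.sum_congr rfl fun i _ => ?_
      by_cases hi : i ∈ I.erase j
      · obtain ⟨hij, hiI⟩ := Finset.mem_erase.1 hi
        rw [if_pos hi, if_pos ⟨hj, hiI, hij⟩, map_neg, Derivation.map_smul, pd_X_mul,
          if_neg hij, zero_add, smul_neg, smul_smul]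
      · rw [if_neg hi, map_zero, smul_zero,
          if_neg (fun h => hi (Finset.mem_erase.2 ⟨h.2.2, h.2.1⟩))]
    · rw [if_neg hj]
      exact (Finset.sum_eq_zero fun i _ => by rw [if_neg (fun h => hj h.1)]).symm
  have e2 : xOp m (dOp m Q) I =
      ∑ i, ∑ j, if i ∈ I ∧ j ∈ I ∧ j ≠ i then
        -((sgn m i I * sgn m j (I.erase i)) •
          (X i * pderiv j (Q ((I.erase i).erase j)))) else 0 := by
    rw [xOp_apply]
    refine Finset.sum_congr rfl fun i _ => ?_
    by_cases hi : i ∈ I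
    · rw [if_pos hi, dOp_apply, Finset.mul_sum, Finset.smul_sum, ← Finset.sum_neg_distrib]
      refine Finset.sum_congr rfl fun j _ => ?_
      by_cases hj : j ∈ I.erase i
      · obtain ⟨hji, hjI⟩ := Finset.mem_erase.1 hj
        rw [if_pos hj, if_pos ⟨hi, hjI, hji⟩, mul_smul_comm, smul_smul]
      · rw [if_neg hj, mul_zero, smul_zero, neg_zero,
          if_neg (fun h => hj (Finset.mem_erase.2 ⟨h.2.2, h.2.1⟩))]
    · rw [if_neg hi]
      exact (Finset.sum_eq_zero fun j _ => by rw [if_neg (fun h => hi h.1)]).symm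
  rw [e1, e2.trans Finset.sum_comm, ← Finset.sum_add_distrib]
  refine Finset.sum_eq_zero fun j _ => ?_
  rw [← Finset.sum_add_distrib]
  refine Finset.sum_eq_zero fun i _ => ?_
  by_cases h : j ∈ I ∧ i ∈ I ∧ i ≠ j
  · obtain ⟨hj, hi, hij⟩ := h
    rw [if_pos ⟨hj, hi, hij⟩, if_pos ⟨hi, hj, hij.symm⟩, Finset.erase_right_comm,
      sgn_erase i j I hij.symm hj, sgn_erase j i I hij hi, ← neg_add, ← add_smul,
      sgn_add_cancel i j hij, zero_smul, neg_zero]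
  · rw [if_neg h, if_neg (fun hh => h ⟨hh.2.1, hh.1, fun e => hh.2.2 e.symm⟩), add_zero]

end Key
section Key2
variable {m : ℕ}

lemma key2 (Q : PForm m) : dStarOp m (xStarOp m Q) + xStarOp m (dStarOp m Q) = 0 := by
  funext I
  show dStarOp m (xStarOp m Q) I + xStarOp m (dStarOp m Q) I = 0
  have e1 : dStarOp m (xStarOp m Q) I =
      ∑ j, ∑ i, if j ∉ I ∧ i ∉ I ∧ i ≠ j then
        -((sgn m j I * sgn m i (insert j I)) •
          (X i * pderiv j (Q (insert i (insert j I))))) else 0 := by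
    rw [dStarOp_apply]
    refine Finset.sum_congr rfl fun j _ => ?_
    by_cases hj : j ∈ I
    · rw [if_pos hj]
      exact (Finset.sum_eq_zero fun i _ => by rw [if_neg (fun h => h.1 hj)]).symm
    · rw [if_neg hj, xStarOp_apply, map_sum, Finset.smul_sum, ← Finset.sum_neg_distrib]
      refine Finset.sum_congr rfl fun i _ => ?_
      by_cases hi : i ∈ insert j I
      · rw [if_pos hi, map_zero, smul_zero, neg_zero,
          if_neg (fun h => (Finset.mem_insert.1 hi).elim h.2.2 h.2.1)]
      · have hij : i ≠ j := fun e => hi (by simp [e])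
        have hiI : i ∉ I := fun e => hi (Finset.mem_insert_of_mem e)
        rw [if_neg hi, if_pos ⟨hj, hiI, hij⟩, Derivation.map_smul, pd_X_mul,
          if_neg hij, zero_add, smul_smul]
  have e2 : xStarOp m (dStarOp m Q) I =
      ∑ i, ∑ j, if i ∉ I ∧ j ∉ I ∧ j ≠ i then
        -((sgn m i I * sgn m j (insert i I)) •
          (X i * pderiv j (Q (insert j (insert i I))))) else 0 := by
    rw [xStarOp_apply]
    refine Finset.sum_congr rfl fun i _ => ?_
    by_cases hi : i ∈ I
    · rw [if_pos hi]
      exact (Finset.sum_eq_zero fun j _ => by rw [if_neg (fun h => h.1 hi)]).symm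
    · rw [if_neg hi, dStarOp_apply, Finset.mul_sum, Finset.smul_sum]
      refine Finset.sum_congr rfl fun j _ => ?_
      by_cases hj : j ∈ insert i I
      · rw [if_pos hj, mul_zero, smul_zero,
          if_neg (fun h => (Finset.mem_insert.1 hj).elim h.2.2 h.2.1)]
      · have hji : j ≠ i := fun e => hj (by simp [e])
        have hjI : j ∉ I := fun e => hj (Finset.mem_insert_of_mem e)
        rw [if_neg hj, if_pos ⟨hi, hjI, hji⟩, mul_neg, smul_neg, mul_smul_comm, smul_smul]
  rw [e1, e2.trans Finset.sum_comm, ← Finset.sum_add_distrib]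
  refine Finset.sum_eq_zero fun j _ => ?_
  rw [← Finset.sum_add_distrib]
  refine Finset.sum_eq_zero fun i _ => ?_
  by_cases h : j ∉ I ∧ i ∉ I ∧ i ≠ j
  · obtain ⟨hj, hi, hij⟩ := h
    rw [if_pos ⟨hj, hi, hij⟩, if_pos ⟨hi, hj, hij.symm⟩, Finset.insert_comm,
      sgn_insert i j I hij.symm hj, sgn_insert j i I hij hi, ← neg_add, ← add_smul,
      sgn_add_cancel i j hij, zero_smul, neg_zero]
  · rw [if_neg h, if_neg (fun hh => h ⟨hh.2.1, hh.1, fun e => hh.2.2 e.symm⟩), add_zero]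

end Key2
section Key3
variable {m : ℕ}

lemma key3 (Q : PForm m) (I : Finset (Fin m)) :
    dOp m (xStarOp m Q) I + xStarOp m (dOp m Q) I
      = ∑ j, (X j * pderiv j (Q I) + if j ∈ I then Q I else 0) := by
  have e1 : dOp m (xStarOp m Q) I =
      ∑ j, ∑ i, if j ∈ I ∧ i ∉ I.erase j then
        ((sgn m j I * sgn m i (I.erase j)) •
          ((if i = j then Q (insert i (I.erase j)) else 0)
            + X i * pderiv j (Q (insert i (I.erase j))))) else 0 := by
    rw [dOp_apply]
    refine Finset.sum_congr rfl fun j _ => ?_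
    by_cases hj : j ∈ I
    · rw [if_pos hj, xStarOp_apply, map_sum, Finset.smul_sum]
      refine Finset.sum_congr rfl fun i _ => ?_
      by_cases hi : i ∈ I.erase j
      · rw [if_pos hi, map_zero, smul_zero, if_neg (fun h => h.2 hi)]
      · rw [if_neg hi, if_pos ⟨hj, hi⟩, Derivation.map_smul, pd_X_mul, smul_smul]
    · rw [if_neg hj]
      exact (Finset.sum_eq_zero fun i _ => by rw [if_neg (fun h => hj h.1)]).symm
  have e2 : xStarOp m (dOp m Q) I =
      ∑ i, ∑ j, if i ∉ I ∧ j ∈ insert i I then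
        ((sgn m i I * sgn m j (insert i I)) •
          (X i * pderiv j (Q ((insert i I).erase j)))) else 0 := by
    rw [xStarOp_apply]
    refine Finset.sum_congr rfl fun i _ => ?_
    by_cases hi : i ∈ I
    · rw [if_pos hi]
      exact (Finset.sum_eq_zero fun j _ => by rw [if_neg (fun h => h.1 hi)]).symm
    · rw [if_neg hi, dOp_apply, Finset.mul_sum, Finset.smul_sum]
      refine Finset.sum_congr rfl fun j _ => ?_
      by_cases hj : j ∈ insert i I
      · rw [if_pos hj, if_pos ⟨hi, hj⟩, mul_smul_comm, smul_smul]
      · rw [if_neg hj, mul_zero, smul_zero, if_neg (fun h => hj h.2)]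
  rw [e1, e2.trans Finset.sum_comm, ← Finset.sum_add_distrib]
  refine Finset.sum_congr rfl fun j _ => ?_
  rw [← Finset.sum_add_distrib, Finset.sum_eq_single_of_mem j (Finset.mem_univ j) ?side]
  case side =>
    intro i _ hij
    by_cases hj : j ∈ I <;> by_cases hi : i ∈ I
    · rw [if_neg (fun h => h.2 (Finset.mem_erase.2 ⟨hij, hi⟩)),
        if_neg (fun h => h.1 hi), add_zero]
    · have c1 : j ∈ I ∧ i ∉ I.erase j := ⟨hj, fun h => hi (Finset.mem_erase.1 h).2⟩
      have c2 : i ∉ I ∧ j ∈ insert i I := ⟨hi, Finset.mem_insert_of_mem hj⟩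
      rw [if_pos c1, if_pos c2, if_neg hij, zero_add,
        Finset.erase_insert_of_ne hij, sgn_erase i j I hij.symm hj,
        sgn_insert j i I hij hi, ← add_smul, sgn_add_cancel i j hij, zero_smul]
    · rw [if_neg (fun h => hj h.1), if_neg (fun h => h.1 hi), add_zero]
    · rw [if_neg (fun h => hj h.1),
        if_neg (fun h => (Finset.mem_insert.1 h.2).elim (fun e => hij e.symm) hj), add_zero]
  · by_cases hj : j ∈ I
    · have c1 : j ∈ I ∧ j ∉ I.erase j := ⟨hj, Finset.notMem_erase j I⟩
      have c2 : ¬(j ∉ I ∧ j ∈ insert j I) := fun h => h.1 hj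
      rw [if_pos c1, if_neg c2, if_pos (rfl : j = j),
        Finset.insert_erase hj, sgn_erase_self, sgn_mul_self, one_smul, if_pos hj, add_zero]
      ring
    · have c1 : ¬(j ∈ I ∧ j ∉ I.erase j) := fun h => hj h.1
      have c2 : j ∉ I ∧ j ∈ insert j I := ⟨hj, Finset.mem_insert_self j I⟩
      rw [if_neg c1, if_pos c2,
        Finset.erase_insert hj, sgn_insert_self, sgn_mul_self, one_smul, if_neg hj, add_zero,
        zero_add]

lemma key4 (Q : PForm m) (I : Finset (Fin m)) :
    dStarOp m (xOp m Q) I + xOp m (dStarOp m Q) I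
      = ∑ j, (X j * pderiv j (Q I) + if j ∈ I then 0 else Q I) := by
  have e1 : dStarOp m (xOp m Q) I =
      ∑ j, ∑ i, if j ∉ I ∧ i ∈ insert j I then
        ((sgn m j I * sgn m i (insert j I)) •
          ((if i = j then Q ((insert j I).erase i) else 0)
            + X i * pderiv j (Q ((insert j I).erase i)))) else 0 := by
    rw [dStarOp_apply]
    refine Finset.sum_congr rfl fun j _ => ?_
    by_cases hj : j ∈ I
    · rw [if_pos hj]
      exact (Finset.sum_eq_zero fun i _ => by rw [if_neg (fun h => h.1 hj)]).symm
    · rw [if_neg hj, xOp_apply, map_sum, Finset.smul_sum, ← Finset.sum_neg_distrib]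
      refine Finset.sum_congr rfl fun i _ => ?_
      by_cases hi : i ∈ insert j I
      · rw [if_pos hi, if_pos ⟨hj, hi⟩, map_neg, Derivation.map_smul, pd_X_mul, smul_neg,
          neg_neg, smul_smul]
      · rw [if_neg hi, map_zero, smul_zero, neg_zero, if_neg (fun h => hi h.2)]
  have e2 : xOp m (dStarOp m Q) I =
      ∑ i, ∑ j, if i ∈ I ∧ j ∉ I.erase i then
        ((sgn m i I * sgn m j (I.erase i)) •
          (X i * pderiv j (Q (insert j (I.erase i))))) else 0 := by
    rw [xOp_apply]
    refine Finset.sum_congr rfl fun i _ => ?_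
    by_cases hi : i ∈ I
    · rw [if_pos hi, dStarOp_apply, Finset.mul_sum, Finset.smul_sum, ← Finset.sum_neg_distrib]
      refine Finset.sum_congr rfl fun j _ => ?_
      by_cases hj : j ∈ I.erase i
      · rw [if_pos hj, mul_zero, smul_zero, neg_zero, if_neg (fun h => h.2 hj)]
      · rw [if_neg hj, if_pos ⟨hi, hj⟩, mul_neg, smul_neg, neg_neg, mul_smul_comm, smul_smul]
    · rw [if_neg hi]
      exact (Finset.sum_eq_zero fun j _ => by rw [if_neg (fun h => hi h.1)]).symm
  rw [e1, e2.trans Finset.sum_comm, ← Finset.sum_add_distrib]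
  refine Finset.sum_congr rfl fun j _ => ?_
  rw [← Finset.sum_add_distrib, Finset.sum_eq_single_of_mem j (Finset.mem_univ j) ?side]
  case side =>
    intro i _ hij
    by_cases hj : j ∈ I <;> by_cases hi : i ∈ I
    · rw [if_neg (fun h => h.1 hj),
        if_neg (fun h => h.2 (Finset.mem_erase.2 ⟨hij.symm, hj⟩)), add_zero]
    · rw [if_neg (fun h => h.1 hj), if_neg (fun h => hi h.1), add_zero]
    · have c1 : j ∉ I ∧ i ∈ insert j I := ⟨hj, Finset.mem_insert_of_mem hi⟩
      have c2 : i ∈ I ∧ j ∉ I.erase i := ⟨hi, fun h => hj (Finset.mem_erase.1 h).2⟩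
      rw [if_pos c1, if_pos c2, if_neg hij, zero_add,
        Finset.erase_insert_of_ne hij.symm, sgn_insert i j I hij.symm hj,
        sgn_erase j i I hij hi, ← add_smul, sgn_add_cancel i j hij, zero_smul]
    · rw [if_neg (fun h => (Finset.mem_insert.1 h.2).elim hij hi),
        if_neg (fun h => hi h.1), add_zero]
  · by_cases hj : j ∈ I
    · have c1 : ¬(j ∉ I ∧ j ∈ insert j I) := fun h => h.1 hj
      have c2 : j ∈ I ∧ j ∉ I.erase j := ⟨hj, Finset.notMem_erase j I⟩
      rw [if_neg c1, if_pos c2,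
        Finset.insert_erase hj, sgn_erase_self, sgn_mul_self, one_smul, if_pos hj, add_zero,
        zero_add]
    · have c1 : j ∉ I ∧ j ∈ insert j I := ⟨hj, Finset.mem_insert_self j I⟩
      have c2 : ¬(j ∈ I ∧ j ∉ I.erase j) := fun h => hj h.1
      rw [if_pos c1, if_neg c2, if_pos (rfl : j = j),
        Finset.erase_insert hj, sgn_insert_self, sgn_mul_self, one_smul, if_neg hj, add_zero]
      ring

end Key3
section Euler
variable {m : ℕ}

lemma euler_mono (d : Fin m →₀ ℕ) (c : ℝ) (j : Fin m) :
    X j * pderiv j (monomial d c) = (d j : ℝ) • monomial d c := by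
  rw [pderiv_monomial]
  by_cases h : d j = 0
  · simp [h]
  · have hd : Finsupp.single j 1 + (d - Finsupp.single j 1) = d := by
      ext x
      rcases eq_or_ne x j with rfl | hx
      · simp only [Finsupp.add_apply, Finsupp.single_apply, Finsupp.tsub_apply]
        simp only [if_true, eq_self_iff_true]
        omega
      · simp only [Finsupp.add_apply, Finsupp.single_apply, Finsupp.tsub_apply]
        rw [if_neg (fun hh : j = x => hx hh.symm)]
        omega
    rw [X, monomial_mul, one_mul, hd, smul_monomial]
    rw [smul_eq_mul, mul_comm]

lemma euler_sum {n : ℕ} {p : MvPolynomial (Fin m) ℝ} (h : p.IsHomogeneous n) :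
    ∑ j, X j * pderiv j p = (n : ℝ) • p := by
  calc ∑ j, X j * pderiv j p
      = ∑ j, ∑ d ∈ p.support, X j * pderiv j (monomial d (coeff d p)) := by
        refine Finset.sum_congr rfl fun j _ => ?_
        conv_lhs => rw [p.as_sum]
        rw [map_sum, Finset.mul_sum]
    _ = ∑ d ∈ p.support, ∑ j, (d j : ℝ) • monomial d (coeff d p) := by
        rw [Finset.sum_comm]
        exact Finset.sum_congr rfl fun d _ => Finset.sum_congr rfl fun j _ => euler_mono ..
    _ = ∑ d ∈ p.support, (n : ℝ) • monomial d (coeff d p) := by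
        refine Finset.sum_congr rfl fun d hd => ?_
        rw [← Finset.sum_smul]
        congr 1
        have h2 : ∑ j : Fin m, d j = n := by
          have hw := h (MvPolynomial.mem_support_iff.mp hd)
          change (Finsupp.weight (fun _ => 1)) d = n at hw
          rw [← Finsupp.degree_eq_weight_one] at hw
          rw [← hw, Finsupp.degree_apply]
          exact (Finset.sum_subset (Finset.subset_univ _)
            (fun x _ hx => Finsupp.notMem_support_iff.mp hx)).symm
        rw [← h2]
        push_cast
        ring
    _ = (n : ℝ) • p := by rw [← Finset.smul_sum, ← p.as_sum]

end Euler
/-- `(d+d*)(xP₁ + x*P₂) = 0 ↔ (k-1+m-s)P₁ + (k-1+s)P₂ = 0`. -/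
theorem monogenic_iff (m s k : ℕ) (hs : 1 ≤ s) (hsm : s ≤ m - 1) (hk : 1 ≤ k)
    (P₁ P₂ : PForm m) (hP₁ : P₁ ∈ Hset m s (k - 1)) (hP₂ : P₂ ∈ Hset m s (k - 1)) :
    (dOp m + dStarOp m) (xOp m P₁ + xStarOp m P₂) = 0 ↔
      ((k : ℝ) - 1 + m - s) • P₁ + ((k : ℝ) - 1 + s) • P₂ = 0 := by
  obtain ⟨hs1, hh1, hd1, hds1⟩ := hP₁
  obtain ⟨hs2, hh2, hd2, hds2⟩ := hP₂
  have e1 : dOp m (xOp m P₁) = 0 := by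
    have h := key1 P₁; rwa [hd1, map_zero, add_zero] at h
  have e2 : dStarOp m (xStarOp m P₂) = 0 := by
    have h := key2 P₂; rwa [hds2, map_zero, add_zero] at h
  have expand : (dOp m + dStarOp m) (xOp m P₁ + xStarOp m P₂)
      = (dOp m (xStarOp m P₂) + xStarOp m (dOp m P₂))
        + (dStarOp m (xOp m P₁) + xOp m (dStarOp m P₁)) := by
    simp only [LinearMap.add_apply, map_add, e1, e2, hd2, hds1, map_zero, add_zero, zero_add]
    abel
  have main : (dOp m + dStarOp m) (xOp m P₁ + xStarOp m P₂)
      = ((k : ℝ) - 1 + m - s) • P₁ + ((k : ℝ) - 1 + s) • P₂ := by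
    rw [expand]
    funext I
    show (dOp m (xStarOp m P₂) + xStarOp m (dOp m P₂)) I
        + (dStarOp m (xOp m P₁) + xOp m (dStarOp m P₁)) I = _
    rw [Pi.add_apply, Pi.add_apply, key3 P₂ I, key4 P₁ I]
    have hk1 : ((k - 1 : ℕ) : ℝ) = (k : ℝ) - 1 := by
      rw [Nat.cast_sub hk, Nat.cast_one]
    have hE2 : ∑ j, X j * pderiv j (P₂ I) = ((k : ℝ) - 1) • P₂ I := by
      rw [euler_sum (hh2 I), hk1]
    have hE1 : ∑ j, X j * pderiv j (P₁ I) = ((k : ℝ) - 1) • P₁ I := by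
      rw [euler_sum (hh1 I), hk1]
    have hcard2 : ∑ j : Fin m, (if j ∈ I then P₂ I else 0) = (s : ℝ) • P₂ I := by
      rw [Finset.sum_ite_mem, Finset.univ_inter, Finset.sum_const]
      by_cases hc : I.card = s
      · rw [hc, ← Nat.cast_smul_eq_nsmul ℝ]
      · simp [hs2 I hc]
    have hcard1 : ∑ j : Fin m, (if j ∈ I then 0 else P₁ I) = ((m : ℝ) - s) • P₁ I := by
      have hsw : ∀ j : Fin m,
          (if j ∈ I then 0 else P₁ I) = P₁ I - (if j ∈ I then P₁ I else 0) := by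
        intro j; by_cases hj : j ∈ I <;> simp [hj]
      rw [Finset.sum_congr rfl fun j _ => hsw j, Finset.sum_sub_distrib, Finset.sum_const,
        Finset.card_univ, Fintype.card_fin, Finset.sum_ite_mem, Finset.univ_inter,
        Finset.sum_const]
      by_cases hc : I.card = s
      · rw [hc, sub_smul, Nat.cast_smul_eq_nsmul, Nat.cast_smul_eq_nsmul]
      · simp [hs1 I hc]
    rw [Finset.sum_add_distrib, Finset.sum_add_distrib, hE2, hE1, hcard1, hcard2,
      Pi.add_apply, Pi.smul_apply, Pi.smul_apply]
    module
  rw [main]
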